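/- arXiv:1211.5449 — 6 statements merged into one kernel-verified Lean document; each statement's English description precedes it below -/
import Mathlib

section
/- Let P be a plane poset. Define a relation ≤ on P by: x ≤ y if and only if (x ≤_h y or x ≤_r y). Then ≤ is a total order on P. -/
open scoped TensorProduct
open scoped Classical

noncomputable section

/-- A plane poset structure on a set `α`: two partial orders `≤_h` (`hle`) and `≤_r` (`rle`)
such that two distinct elements are comparable for `≤_h` if and only if they are not
comparable for `≤_r`. -/
structure PlanePoset (α : Type) where
  hle : α → α → Prop
  rle : α → α → Prop
  hle_refl : ∀ x, hle x x
  hle_antisymm : ∀ x y, hle x y → hle y x → x = y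
  hle_trans : ∀ x y z, hle x y → hle y z → hle x z
  rle_refl : ∀ x, rle x x
  rle_antisymm : ∀ x y, rle x y → rle y x → x = y
  rle_trans : ∀ x y z, rle x y → rle y z → rle x z
  compat : ∀ x y, x ≠ y → ((hle x y ∨ hle y x) ↔ ¬ (rle x y ∨ rle y x))

namespace PlanePoset

variable {α β : Type}

/-- The induced (total) order `x ≤ y iff x ≤_h y or x ≤_r y`. -/
def tle (P : PlanePoset α) (x y : α) : Prop := P.hle x y ∨ P.rle x y

/-- Transport of a plane poset structure along a bijection. -/
def map (e : α ≃ β) (P : PlanePoset α) : PlanePoset β where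
  hle x y := P.hle (e.symm x) (e.symm y)
  rle x y := P.rle (e.symm x) (e.symm y)
  hle_refl x := P.hle_refl _
  hle_antisymm x y h1 h2 := e.symm.injective (P.hle_antisymm _ _ h1 h2)
  hle_trans x y z h1 h2 := P.hle_trans _ _ _ h1 h2
  rle_refl x := P.rle_refl _
  rle_antisymm x y h1 h2 := e.symm.injective (P.rle_antisymm _ _ h1 h2)
  rle_trans x y z h1 h2 := P.rle_trans _ _ _ h1 h2
  compat x y hxy := P.compat _ _ fun h => hxy (e.symm.injective h)

@[simp] theorem map_hle (e : α ≃ β) (P : PlanePoset α) (x y : β) :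
    (P.map e).hle x y ↔ P.hle (e.symm x) (e.symm y) := Iff.rfl

@[simp] theorem map_rle (e : α ≃ β) (P : PlanePoset α) (x y : β) :
    (P.map e).rle x y ↔ P.rle (e.symm x) (e.symm y) := Iff.rfl

/-- The composition `PQ` of two plane posets: `x ≤_r y` for every `x ∈ P`, `y ∈ Q`. -/
def comp (P : PlanePoset α) (Q : PlanePoset β) : PlanePoset (α ⊕ β) where
  hle x y :=
    match x, y with
    | Sum.inl a, Sum.inl b => P.hle a b
    | Sum.inr a, Sum.inr b => Q.hle a b
    | _, _ => False
  rle x y :=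
    match x, y with
    | Sum.inl a, Sum.inl b => P.rle a b
    | Sum.inr a, Sum.inr b => Q.rle a b
    | Sum.inl _, Sum.inr _ => True
    | Sum.inr _, Sum.inl _ => False
  hle_refl := by
    rintro (a | a)
    · exact P.hle_refl a
    · exact Q.hle_refl a
  hle_antisymm := by
    rintro (a | a) (b | b) h1 h2
    · exact congrArg Sum.inl (P.hle_antisymm a b h1 h2)
    · exact h1.elim
    · exact h1.elim
    · exact congrArg Sum.inr (Q.hle_antisymm a b h1 h2)
  hle_trans := by
    rintro (a | a) (b | b) (c | c) h1 h2 <;>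
      first
        | exact P.hle_trans _ _ _ h1 h2
        | exact Q.hle_trans _ _ _ h1 h2
        | exact h1.elim
        | exact h2.elim
  rle_refl := by
    rintro (a | a)
    · exact P.rle_refl a
    · exact Q.rle_refl a
  rle_antisymm := by
    rintro (a | a) (b | b) h1 h2
    · exact congrArg Sum.inl (P.rle_antisymm a b h1 h2)
    · exact h2.elim
    · exact h1.elim
    · exact congrArg Sum.inr (Q.rle_antisymm a b h1 h2)
  rle_trans := by
    rintro (a | a) (b | b) (c | c) h1 h2 <;>
      first
        | exact P.rle_trans _ _ _ h1 h2
        | exact Q.rle_trans _ _ _ h1 h2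
        | exact h1.elim
        | exact h2.elim
        | trivial
  compat := by
    rintro (a | a) (b | b) hne
    · exact P.compat a b fun h => hne (congrArg Sum.inl h)
    · show (False ∨ False) ↔ ¬ (True ∨ False)
      simp
    · show (False ∨ False) ↔ ¬ (False ∨ True)
      simp
    · exact Q.compat a b fun h => hne (congrArg Sum.inr h)

/-- The product `P ▷ Q` of two plane posets: `x ≤_h y` for every `x ∈ P`, `y ∈ Q`. -/
def hcomp (P : PlanePoset α) (Q : PlanePoset β) : PlanePoset (α ⊕ β) where
  hle x y :=
    match x, y with
    | Sum.inl a, Sum.inl b => P.hle a b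
    | Sum.inr a, Sum.inr b => Q.hle a b
    | Sum.inl _, Sum.inr _ => True
    | Sum.inr _, Sum.inl _ => False
  rle x y :=
    match x, y with
    | Sum.inl a, Sum.inl b => P.rle a b
    | Sum.inr a, Sum.inr b => Q.rle a b
    | _, _ => False
  hle_refl := by
    rintro (a | a)
    · exact P.hle_refl a
    · exact Q.hle_refl a
  hle_antisymm := by
    rintro (a | a) (b | b) h1 h2
    · exact congrArg Sum.inl (P.hle_antisymm a b h1 h2)
    · exact h2.elim
    · exact h1.elim
    · exact congrArg Sum.inr (Q.hle_antisymm a b h1 h2)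
  hle_trans := by
    rintro (a | a) (b | b) (c | c) h1 h2 <;>
      first
        | exact P.hle_trans _ _ _ h1 h2
        | exact Q.hle_trans _ _ _ h1 h2
        | exact h1.elim
        | exact h2.elim
        | trivial
  rle_refl := by
    rintro (a | a)
    · exact P.rle_refl a
    · exact Q.rle_refl a
  rle_antisymm := by
    rintro (a | a) (b | b) h1 h2
    · exact congrArg Sum.inl (P.rle_antisymm a b h1 h2)
    · exact h1.elim
    · exact h1.elim
    · exact congrArg Sum.inr (Q.rle_antisymm a b h1 h2)
  rle_trans := by
    rintro (a | a) (b | b) (c | c) h1 h2 <;>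
      first
        | exact P.rle_trans _ _ _ h1 h2
        | exact Q.rle_trans _ _ _ h1 h2
        | exact h1.elim
        | exact h2.elim
  compat := by
    rintro (a | a) (b | b) hne
    · exact P.compat a b fun h => hne (congrArg Sum.inl h)
    · show (True ∨ False) ↔ ¬ (False ∨ False)
      simp
    · show (False ∨ True) ↔ ¬ (False ∨ False)
      simp
    · exact Q.compat a b fun h => hne (congrArg Sum.inr h)

/-- Restriction of a plane poset to a subset (a plane subposet). -/
def res (P : PlanePoset α) (s : Finset α) : PlanePoset {x : α // x ∈ s} where
  hle x y := P.hle x.1 y.1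
  rle x y := P.rle x.1 y.1
  hle_refl x := P.hle_refl _
  hle_antisymm x y h1 h2 := Subtype.ext (P.hle_antisymm _ _ h1 h2)
  hle_trans x y z h1 h2 := P.hle_trans _ _ _ h1 h2
  rle_refl x := P.rle_refl _
  rle_antisymm x y h1 h2 := Subtype.ext (P.rle_antisymm _ _ h1 h2)
  rle_trans x y z h1 h2 := P.rle_trans _ _ _ h1 h2
  compat x y hxy := P.compat _ _ fun h => hxy (Subtype.ext h)

/-- The involution `ι` exchanging the two partial orders. -/
def swap (P : PlanePoset α) : PlanePoset α where
  hle := P.rle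
  rle := P.hle
  hle_refl := P.rle_refl
  hle_antisymm := P.rle_antisymm
  hle_trans := P.rle_trans
  rle_refl := P.hle_refl
  rle_antisymm := P.hle_antisymm
  rle_trans := P.hle_trans
  compat x y hxy := by
    have h := P.compat x y hxy
    tauto

end PlanePoset

/-- A plane poset structure on `Fin n` is canonical when the induced total order
is the usual order on `{1, …, n}`. -/
def IsCanon {n : ℕ} (P : PlanePoset (Fin n)) : Prop :=
  ∀ x y : Fin n, (P.hle x y ∨ P.rle x y) ↔ x ≤ y

/-- `PP(n)`: (isoclasses of) plane posets of cardinality `n`, realized as the canonical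
plane poset structures on `{1, …, n}`. -/
def CanonPP (n : ℕ) : Type := { P : PlanePoset (Fin n) // IsCanon P }

namespace CanonPP

/-- The empty plane poset, unit of both products. -/
def one : CanonPP 0 :=
  ⟨{ hle := fun _ _ => True
     rle := fun _ _ => True
     hle_refl := fun _ => trivial
     hle_antisymm := fun x => x.elim0
     hle_trans := fun _ _ _ _ _ => trivial
     rle_refl := fun _ => trivial
     rle_antisymm := fun x => x.elim0
     rle_trans := fun _ _ _ _ _ => trivial
     compat := fun x => x.elim0 }, fun x => x.elim0⟩

/-- The composition `PQ` of plane posets, realized canonically. -/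
def comp {k l : ℕ} (P : CanonPP k) (Q : CanonPP l) : CanonPP (k + l) :=
  ⟨(P.1.comp Q.1).map finSumFinEquiv, by
    intro x y
    obtain ⟨a, rfl⟩ := finSumFinEquiv.surjective x
    obtain ⟨b, rfl⟩ := finSumFinEquiv.surjective y
    simp only [PlanePoset.map_hle, PlanePoset.map_rle, Equiv.symm_apply_apply]
    rcases a with a | a <;> rcases b with b | b
    · show (P.1.hle a b ∨ P.1.rle a b) ↔ _
      rw [P.2 a b, finSumFinEquiv_apply_left, finSumFinEquiv_apply_left]
      simp only [Fin.le_def, Fin.coe_castAdd]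
      try omega
    · show (False ∨ True) ↔ _
      rw [finSumFinEquiv_apply_left, finSumFinEquiv_apply_right]
      have ha := a.isLt
      simp only [false_or, true_iff, Fin.le_def, Fin.coe_castAdd, Fin.coe_natAdd]
      omega
    · show (False ∨ False) ↔ _
      rw [finSumFinEquiv_apply_right, finSumFinEquiv_apply_left]
      have hb := b.isLt
      simp only [or_self, false_iff, Fin.le_def, Fin.coe_natAdd, Fin.coe_castAdd]
      omega
    · show (Q.1.hle a b ∨ Q.1.rle a b) ↔ _
      rw [Q.2 a b, finSumFinEquiv_apply_right, finSumFinEquiv_apply_right]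
      simp only [Fin.le_def, Fin.coe_natAdd]
      omega⟩

/-- The product `P ▷ Q` of plane posets, realized canonically. -/
def hcomp {k l : ℕ} (P : CanonPP k) (Q : CanonPP l) : CanonPP (k + l) :=
  ⟨(P.1.hcomp Q.1).map finSumFinEquiv, by
    intro x y
    obtain ⟨a, rfl⟩ := finSumFinEquiv.surjective x
    obtain ⟨b, rfl⟩ := finSumFinEquiv.surjective y
    simp only [PlanePoset.map_hle, PlanePoset.map_rle, Equiv.symm_apply_apply]
    rcases a with a | a <;> rcases b with b | b
    · show (P.1.hle a b ∨ P.1.rle a b) ↔ _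
      rw [P.2 a b, finSumFinEquiv_apply_left, finSumFinEquiv_apply_left]
      simp only [Fin.le_def, Fin.coe_castAdd]
      try omega
    · show (True ∨ False) ↔ _
      rw [finSumFinEquiv_apply_left, finSumFinEquiv_apply_right]
      have ha := a.isLt
      simp only [or_false, true_iff, Fin.le_def, Fin.coe_castAdd, Fin.coe_natAdd]
      omega
    · show (False ∨ False) ↔ _
      rw [finSumFinEquiv_apply_right, finSumFinEquiv_apply_left]
      have hb := b.isLt
      simp only [or_self, false_iff, Fin.le_def, Fin.coe_natAdd, Fin.coe_castAdd]
      omega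
    · show (Q.1.hle a b ∨ Q.1.rle a b) ↔ _
      rw [Q.2 a b, finSumFinEquiv_apply_right, finSumFinEquiv_apply_right]
      simp only [Fin.le_def, Fin.coe_natAdd]
      omega⟩

/-- Restriction of a plane poset to a plane subposet, realized canonically via the unique
increasing bijection. -/
def restrict {n : ℕ} (P : CanonPP n) (s : Finset (Fin n)) : CanonPP s.card :=
  ⟨(P.1.res s).map (s.orderIsoOfFin rfl).toEquiv.symm, by
    intro i j
    simp only [PlanePoset.map_hle, PlanePoset.map_rle, Equiv.symm_symm]
    show (P.1.hle ((s.orderIsoOfFin rfl).toEquiv i).1 ((s.orderIsoOfFin rfl).toEquiv j).1 ∨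
          P.1.rle ((s.orderIsoOfFin rfl).toEquiv i).1 ((s.orderIsoOfFin rfl).toEquiv j).1) ↔ i ≤ j
    rw [P.2]
    rw [Subtype.coe_le_coe]
    exact (s.orderIsoOfFin rfl).le_iff_le⟩

/-- The involution `ι`, on canonical plane posets. -/
def iota {n : ℕ} (P : CanonPP n) : CanonPP n :=
  ⟨P.1.swap, fun x y => by rw [or_comm]; exact P.2 x y⟩

end CanonPP

/-- The partial (weak Bruhat) order on `PP(n)`: `P ≤ Q` iff `x ≤_h y` in `Q` implies
`x ≤_h y` in `P` (the increasing bijection between canonical representatives being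
the identity). -/
def PPle {n : ℕ} (P Q : CanonPP n) : Prop :=
  ∀ x y : Fin n, Q.1.hle x y → P.1.hle x y

/-- Strict version of the order on `PP(n)`. -/
def PPlt {n : ℕ} (P Q : CanonPP n) : Prop := PPle P Q ∧ P ≠ Q

/-- Covering relation of the poset `(PP(n), ≤)`. -/
def PPcovBy {n : ℕ} (P Q : CanonPP n) : Prop :=
  PPlt P Q ∧ ∀ T : CanonPP n, PPlt P T → ¬ PPlt T Q

/-- `E(P) = {(i,j) | i <_h j}`. -/
def Eset {n : ℕ} (P : CanonPP n) : Set (Fin n × Fin n) :=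
  {p | P.1.hle p.1 p.2 ∧ p.1 ≠ p.2}

/-- A biideal of a plane poset: an ideal for both partial orders, equivalently an ideal
for the induced total order. -/
def IsBiideal {n : ℕ} (P : CanonPP n) (I : Finset (Fin n)) : Prop :=
  ∀ x y : Fin n, x ∈ I → (P.1.hle x y ∨ P.1.rle x y) → y ∈ I

/-- `h_s^t = #{(x,y) ∈ s × t | x <_h y}`. -/
def hNum {n : ℕ} (P : CanonPP n) (s t : Finset (Fin n)) : ℕ :=
  ((s ×ˢ t).filter (fun p : Fin n × Fin n => P.1.hle p.1 p.2 ∧ p.1 ≠ p.2)).card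

/-- `φ(P,Q) = #{(x,y) | x <_r y in P and x <_h y in Q} + #{(x,y) | x <_h y in P and
x <_r y in Q}` (via the identity increasing bijection). -/
def phi {n : ℕ} (P Q : CanonPP n) : ℕ :=
  (Finset.univ.filter (fun p : Fin n × Fin n =>
      (P.1.rle p.1 p.2 ∧ p.1 ≠ p.2) ∧ (Q.1.hle p.1 p.2 ∧ p.1 ≠ p.2))).card +
  (Finset.univ.filter (fun p : Fin n × Fin n =>
      (P.1.hle p.1 p.2 ∧ p.1 ≠ p.2) ∧ (Q.1.rle p.1 p.2 ∧ p.1 ≠ p.2))).card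

/-- The level `ℓ(P) = #{(x,y) | x <_r y}`. -/
def level {n : ℕ} (P : CanonPP n) : ℕ :=
  (Finset.univ.filter (fun p : Fin n × Fin n => P.1.rle p.1 p.2 ∧ p.1 ≠ p.2)).card

/-- The plane poset `P_σ = Ψ_n(σ)` associated to a permutation `σ`. -/
def PsiPerm {n : ℕ} (σ : Equiv.Perm (Fin n)) : CanonPP n :=
  ⟨{ hle := fun i j => i ≤ j ∧ σ.symm i ≤ σ.symm j
     rle := fun i j => i ≤ j ∧ σ.symm j ≤ σ.symm i
     hle_refl := fun x => ⟨le_refl x, le_refl _⟩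
     hle_antisymm := fun x y h1 h2 => le_antisymm h1.1 h2.1
     hle_trans := fun x y z h1 h2 => ⟨le_trans h1.1 h2.1, le_trans h1.2 h2.2⟩
     rle_refl := fun x => ⟨le_refl x, le_refl _⟩
     rle_antisymm := fun x y h1 h2 => le_antisymm h1.1 h2.1
     rle_trans := fun x y z h1 h2 => ⟨le_trans h1.1 h2.1, le_trans h2.2 h1.2⟩
     compat := by
       intro x y hxy
       have h1 : (x : ℕ) ≠ (y : ℕ) := fun h => hxy (Fin.ext h)
       have h2 : ((σ.symm x : Fin n) : ℕ) ≠ ((σ.symm y : Fin n) : ℕ) :=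
         fun h => hxy (σ.symm.injective (Fin.ext h))
       simp only [Fin.le_def]
       omega },
   by
     intro x y
     show ((x ≤ y ∧ σ.symm x ≤ σ.symm y) ∨ (x ≤ y ∧ σ.symm y ≤ σ.symm x)) ↔ x ≤ y
     simp only [Fin.le_def]
     omega⟩

/-- One step of the weak Bruhat order: exchange two consecutive letters `i < j`
(`i` appearing immediately before `j`) in the word `σ(1) ⋯ σ(n)`. -/
def bruhatStep {n : ℕ} (σ τ : Equiv.Perm (Fin n)) : Prop :=
  ∃ (i j k : Fin n) (hk : (k : ℕ) + 1 < n),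
    i < j ∧ σ k = i ∧ σ ⟨(k : ℕ) + 1, hk⟩ = j ∧ τ = Equiv.swap i j * σ

/-- The set of (isoclasses of) plane posets. -/
abbrev PPS : Type := Σ n : ℕ, CanonPP n

/-- Composition product on plane posets. -/
def PPS.comp (P Q : PPS) : PPS := ⟨P.1 + Q.1, P.2.comp Q.2⟩

/-- The product `▷` on plane posets. -/
def PPS.hcomp (P Q : PPS) : PPS := ⟨P.1 + Q.1, P.2.hcomp Q.2⟩

/-- Value of the coproduct `Δ_q` on a plane poset:
`Δ_q(P) = Σ_{I biideal of P} q^{h_{P∖I}^I} (P∖I) ⊗ I`. -/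
def deltaOn (K : Type) [Field K] (q : K) {n : ℕ} (P : CanonPP n) :
    (PPS →₀ K) ⊗[K] (PPS →₀ K) :=
  ∑ I ∈ Finset.univ.filter (fun I : Finset (Fin n) => IsBiideal P I),
    q ^ hNum P Iᶜ I •
      (Finsupp.single (⟨Iᶜ.card, P.restrict Iᶜ⟩ : PPS) (1 : K) ⊗ₜ[K]
        Finsupp.single (⟨I.card, P.restrict I⟩ : PPS) (1 : K))

/-- The coproduct `Δ_q` on `h_PP`, extended linearly. -/
def Delta (K : Type) [Field K] (q : K) :
    (PPS →₀ K) →ₗ[K] (PPS →₀ K) ⊗[K] (PPS →₀ K) :=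
  Finsupp.lift _ K PPS fun P => deltaOn K q P.2

/-- The composition product `m`, extended bilinearly to `h_PP`. -/
def mulPP (K : Type) [Field K] : (PPS →₀ K) →ₗ[K] (PPS →₀ K) →ₗ[K] (PPS →₀ K) :=
  Finsupp.lift _ K PPS fun P =>
    Finsupp.lift _ K PPS fun Q => Finsupp.single (PPS.comp P Q) 1

/-- The componentwise product on `h_PP ⊗ h_PP`. -/
def mulT (K : Type) [Field K] :
    ((PPS →₀ K) ⊗[K] (PPS →₀ K)) →ₗ[K] ((PPS →₀ K) ⊗[K] (PPS →₀ K)) →ₗ[K]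
      ((PPS →₀ K) ⊗[K] (PPS →₀ K)) :=
  TensorProduct.map₂ (mulPP K) (mulPP K)

/-- Multiplication of the basis element of a plane poset by `q^{n·c}` where `n` is its
cardinality. -/
def scale (K : Type) [Field K] (q : K) (c : ℕ) : (PPS →₀ K) →ₗ[K] (PPS →₀ K) :=
  Finsupp.lift _ K PPS fun P => q ^ (P.1 * c) • Finsupp.single P 1

/-- Right multiplication by a plane poset for the product `▷`. -/
def rmulH (K : Type) [Field K] (Q : PPS) : (PPS →₀ K) →ₗ[K] (PPS →₀ K) :=
  Finsupp.lift _ K PPS fun P => Finsupp.single (PPS.hcomp P Q) 1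

/-- Left multiplication by a plane poset for the product `▷`. -/
def lmulH (K : Type) [Field K] (P : PPS) : (PPS →₀ K) →ₗ[K] (PPS →₀ K) :=
  Finsupp.lift _ K PPS fun Q => Finsupp.single (PPS.hcomp P Q) 1

/-- The pairing on plane posets of the same cardinality:
`⟨P,Q⟩_q = q^{φ(P,Q)}` if `ι(P) ≤ Q`, and `0` otherwise. -/
def pairN (K : Type) [Field K] (q : K) {n : ℕ} (P Q : CanonPP n) : K :=
  if PPle (CanonPP.iota P) Q then q ^ phi P Q else 0

/-- The pairing `⟨-,-⟩_q` on plane posets (zero on posets of different cardinalities). -/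
def pairPP (K : Type) [Field K] (q : K) (P Q : PPS) : K :=
  if h : P.1 = Q.1 then pairN K q (cast (congrArg CanonPP h) P.2) Q.2 else 0

/-- The pairing `⟨-,-⟩_q`, extended bilinearly to `h_PP`. -/
def Bform (K : Type) [Field K] (q : K) : (PPS →₀ K) →ₗ[K] (PPS →₀ K) →ₗ[K] K :=
  Finsupp.lift _ K PPS fun P => Finsupp.lift K K PPS fun Q => pairPP K q P Q

end

/-- Let `P` be a plane poset. The relation `x ≤ y iff (x ≤_h y or x ≤_r y)`
is a total order on `P`. -/
theorem statement0 {α : Type} [Fintype α] (P : PlanePoset α) :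
    IsLinearOrder α (fun x y => P.hle x y ∨ P.rle x y) := by
  classical
  -- totality
  have total : ∀ x y : α, (P.hle x y ∨ P.rle x y) ∨ (P.hle y x ∨ P.rle y x) := by
    intro x y
    by_cases hxy : x = y
    · subst hxy; exact Or.inl (Or.inl (P.hle_refl x))
    · by_cases h : P.hle x y ∨ P.hle y x
      · rcases h with h | h
        · exact Or.inl (Or.inl h)
        · exact Or.inr (Or.inl h)
      · rcases not_not.mp ((P.compat x y hxy).not.mp h) with hr | hr
        · exact Or.inl (Or.inr hr)
        · exact Or.inr (Or.inr hr)
  have hrefl : ∀ x : α, P.hle x x ∨ P.rle x x := fun x => Or.inl (P.hle_refl x)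
  have htrans : ∀ x y z : α, (P.hle x y ∨ P.rle x y) → (P.hle y z ∨ P.rle y z) →
      (P.hle x z ∨ P.rle x z) := by
    intro x y z hxy hyz
    by_cases hxz0 : x = z
    · subst hxz0; exact Or.inl (P.hle_refl x)
    by_cases hxy0 : x = y
    · subst hxy0; exact hyz
    by_cases hyz0 : y = z
    · subst hyz0; exact hxy
    rcases hxy with h1 | h1 <;> rcases hyz with h2 | h2
    · exact Or.inl (P.hle_trans _ _ _ h1 h2)
    · -- hle x y, rle y z
      by_contra hc
      push_neg at hc
      rcases total x z with h | h
      · exact absurd h (not_or.mpr hc)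
      rcases h with h | h
      · -- hle z x : then hle z y, contradicting rle y z
        have hzy := P.hle_trans _ _ _ h h1
        exact ((P.compat z y (Ne.symm hyz0)).mp (Or.inl hzy)) (Or.inr h2)
      · -- rle z x : then rle y x, contradicting hle x y
        have hyx := P.rle_trans _ _ _ h2 h
        exact ((P.compat x y hxy0).mp (Or.inl h1)) (Or.inr hyx)
    · -- rle x y, hle y z
      by_contra hc
      push_neg at hc
      rcases total x z with h | h
      · exact absurd h (not_or.mpr hc)
      rcases h with h | h
      · have hyx := P.hle_trans _ _ _ h2 h
        exact ((P.compat x y hxy0).mp (Or.inr hyx)) (Or.inl h1)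
      · have hzy := P.rle_trans _ _ _ h h1
        exact ((P.compat z y (Ne.symm hyz0)).mp (Or.inr h2)) (Or.inl hzy)
    · exact Or.inr (P.rle_trans _ _ _ h1 h2)
  have hanti : ∀ x y : α, (P.hle x y ∨ P.rle x y) → (P.hle y x ∨ P.rle y x) → x = y := by
    intro x y hxy hyx
    by_contra hne
    rcases hxy with h1 | h1 <;> rcases hyx with h2 | h2
    · exact hne (P.hle_antisymm _ _ h1 h2)
    · exact ((P.compat x y hne).mp (Or.inl h1)) (Or.inr h2)
    · exact ((P.compat x y hne).mp (Or.inr h2)) (Or.inl h1)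
    · exact hne (P.rle_antisymm _ _ h1 h2)
  exact { refl := hrefl, trans := htrans, antisymm := hanti, total := total }
end

section
/- For every n ≥ 0, the map Ψ_n : S_n → PP(n) defined by Ψ_n(σ) = P_σ is a bijection, where P_σ is the plane poset with underlying set {1,…,n}, with i ≤_h j iff (i ≤ j and σ⁻¹(i) ≤ σ⁻¹(j)), and i ≤_r j iff (i ≤ j and σ⁻¹(i) ≥ σ⁻¹(j)); moreover the total order on {1,…,n} induced by this plane poset structure (x ≤ y iff x ≤_h y or x ≤_r y) is the usual order. Here PP(n) is identified with the set of plane poset structures on {1,…,n} whose induced total order is the usual order. -/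
open scoped TensorProduct
open scoped Classical

/-! A plane poset carries, besides `x ≤_h y ∨ x ≤_r y`, a second total order
`x ≤_h y ∨ y ≤_r x`. The two total orders determine both partial orders, and on `P_σ` the
second one is `σ⁻¹ x ≤ σ⁻¹ y`; so `P_σ` determines `σ`, and a canonical plane poset is
`P_σ` for the permutation `σ` ranking `{1, …, n}` in its second total order. -/

namespace PlanePoset

variable {α : Type} (P : PlanePoset α)

def hrLE (x y : α) : Prop := P.hle x y ∨ P.rle y x

variable {P}

theorem eq_of_hle_of_rle {x y : α} (h : P.hle x y ∨ P.hle y x) (r : P.rle x y ∨ P.rle y x) :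
    x = y := by
  by_contra hne
  exact (P.compat x y hne).1 h r

theorem hrLE_total (x y : α) : P.hrLE x y ∨ P.hrLE y x := by
  by_cases hxy : x = y
  · exact Or.inl (hxy ▸ Or.inl (P.hle_refl x))
  by_cases h : P.hle x y ∨ P.hle y x
  · exact h.imp Or.inl Or.inl
  · have r : P.rle x y ∨ P.rle y x := not_not.1 fun r => h ((P.compat x y hxy).2 r)
    exact r.symm.imp Or.inr Or.inr

theorem hrLE_antisymm {x y : α} : P.hrLE x y → P.hrLE y x → x = y := by
  rintro (hxy | ryx) (hyx | rxy)
  · exact P.hle_antisymm x y hxy hyx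
  · exact eq_of_hle_of_rle (Or.inl hxy) (Or.inl rxy)
  · exact eq_of_hle_of_rle (Or.inr hyx) (Or.inr ryx)
  · exact P.rle_antisymm x y rxy ryx

theorem hrLE_of_hle_of_rle {x y z : α} (hxy : P.hle x y) (rzy : P.rle z y) : P.hrLE x z := by
  rcases hrLE_total x z with hxz | hzx | rxz
  · exact hxz
  · obtain rfl : z = y := eq_of_hle_of_rle (Or.inl (P.hle_trans _ _ _ hzx hxy)) (Or.inl rzy)
    exact Or.inl hxy
  · obtain rfl : x = y := eq_of_hle_of_rle (Or.inl hxy) (Or.inl (P.rle_trans _ _ _ rxz rzy))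
    exact Or.inr rzy

theorem hrLE_of_rle_of_hle {x y z : α} (ryx : P.rle y x) (hyz : P.hle y z) : P.hrLE x z := by
  rcases hrLE_total x z with hxz | hzx | rxz
  · exact hxz
  · obtain rfl : y = x := eq_of_hle_of_rle (Or.inl (P.hle_trans _ _ _ hyz hzx)) (Or.inl ryx)
    exact Or.inl hyz
  · obtain rfl : y = z := eq_of_hle_of_rle (Or.inl hyz) (Or.inl (P.rle_trans _ _ _ ryx rxz))
    exact Or.inr ryx

theorem hrLE_trans {x y z : α} : P.hrLE x y → P.hrLE y z → P.hrLE x z := by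
  rintro (hxy | ryx) (hyz | rzy)
  · exact Or.inl (P.hle_trans _ _ _ hxy hyz)
  · exact hrLE_of_hle_of_rle hxy rzy
  · exact hrLE_of_rle_of_hle ryx hyz
  · exact Or.inr (P.rle_trans _ _ _ rzy ryx)

variable (P) in
noncomputable abbrev hrLinearOrder : LinearOrder α where
  le := P.hrLE
  le_refl x := Or.inl (P.hle_refl x)
  le_trans _ _ _ := hrLE_trans
  le_antisymm _ _ := hrLE_antisymm
  le_total := hrLE_total
  toDecidableLE := Classical.decRel _

theorem hle_iff_tle_and_hrLE {x y : α} : P.hle x y ↔ P.tle x y ∧ P.hrLE x y := by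
  refine ⟨fun h => ⟨Or.inl h, Or.inl h⟩, ?_⟩
  rintro ⟨hxy | rxy, hxy' | ryx⟩
  · exact hxy
  · exact hxy
  · exact hxy'
  · exact P.rle_antisymm x y rxy ryx ▸ P.hle_refl x

theorem rle_iff_tle_and_hrLE {x y : α} : P.rle x y ↔ P.tle x y ∧ P.hrLE y x := by
  refine ⟨fun r => ⟨Or.inr r, Or.inr r⟩, ?_⟩
  rintro ⟨hxy | rxy, hyx | rxy'⟩
  · exact P.hle_antisymm x y hxy hyx ▸ P.rle_refl x
  · exact rxy'
  · exact rxy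
  · exact rxy

theorem ext_of_tle_of_hrLE {Q : PlanePoset α} (htle : ∀ x y, P.tle x y ↔ Q.tle x y)
    (hhr : ∀ x y, P.hrLE x y ↔ Q.hrLE x y) : P = Q := by
  have hh : P.hle = Q.hle := by
    funext x y
    exact propext <| hle_iff_tle_and_hrLE.trans <|
      (and_congr (htle x y) (hhr x y)).trans hle_iff_tle_and_hrLE.symm
  have hr : P.rle = Q.rle := by
    funext x y
    exact propext <| rle_iff_tle_and_hrLE.trans <|
      (and_congr (htle x y) (hhr y x)).trans rle_iff_tle_and_hrLE.symm
  cases P; cases Q; cases hh; cases hr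
  rfl

end PlanePoset

theorem Equiv.Perm.exists_le_iff_symm_le {n : ℕ} (L : LinearOrder (Fin n)) :
    ∃ σ : Equiv.Perm (Fin n), ∀ x y, L.le x y ↔ σ.symm x ≤ σ.symm y := by
  let e := @monoEquivOfFin (Fin n) _ L n (Fintype.card_fin n)
  refine ⟨e.toEquiv, fun x y => ?_⟩
  simpa only [Equiv.apply_symm_apply] using
    e.map_rel_iff' (a := e.toEquiv.symm x) (b := e.toEquiv.symm y)

theorem Equiv.Perm.eq_of_symm_le_iff {n : ℕ} {σ τ : Equiv.Perm (Fin n)}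
    (h : ∀ x y, σ.symm x ≤ σ.symm y ↔ τ.symm x ≤ τ.symm y) : σ = τ := by
  let f : Fin n ≃o Fin n := ⟨τ.trans σ.symm, fun {a b} => by simpa using h (τ a) (τ b)⟩
  have hf : f = OrderIso.refl _ := Subsingleton.elim _ _
  exact Equiv.ext fun a => (σ.symm_apply_eq.mp (congrArg (fun g : Fin n ≃o Fin n => g a) hf)).symm

theorem psiPerm_hrLE_iff {n : ℕ} (σ : Equiv.Perm (Fin n)) (x y : Fin n) :
    (PsiPerm σ).1.hrLE x y ↔ σ.symm x ≤ σ.symm y := by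
  show (x ≤ y ∧ σ.symm x ≤ σ.symm y) ∨ (y ≤ x ∧ σ.symm x ≤ σ.symm y) ↔ _
  rw [← or_and_right]
  exact and_iff_right (le_total x y)

/-- For every `n ≥ 0`, the map `Ψ_n : S_n → PP(n)`, `σ ↦ P_σ`, is a
bijection onto the set of plane poset structures on `{1,…,n}` whose induced total order is
the usual one (the latter fact, together with the description of the two partial orders of
`P_σ`, is part of the definition of `PsiPerm`). -/
theorem statement1 (n : ℕ) :
    Function.Bijective (fun σ : Equiv.Perm (Fin n) => PsiPerm σ) := by
  refine ⟨fun σ τ h => ?_, fun P => ?_⟩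
  · refine Equiv.Perm.eq_of_symm_le_iff fun x y => ?_
    rw [← psiPerm_hrLE_iff, ← psiPerm_hrLE_iff, show PsiPerm σ = PsiPerm τ from h]
  · obtain ⟨σ, hσ⟩ := Equiv.Perm.exists_le_iff_symm_le P.1.hrLinearOrder
    refine ⟨σ, Subtype.ext (PlanePoset.ext_of_tle_of_hrLE (fun x y => ?_) fun x y => ?_)⟩
    · exact ((PsiPerm σ).2 x y).trans (P.2 x y).symm
    · exact (psiPerm_hrLE_iff σ x y).trans (hσ x y).symm
end

section
/- Let q ∈ K and let Δ_q be the coproduct on the vector space h_PP with basis the plane posets, defined on a plane poset P by Δ_q(P) = Σ over biideals I of P of q^{h_{P∖I}^{I}} (P∖I) ⊗ I. Then Δ_q is coassociative: (Id ⊗ Δ_q) ∘ Δ_q = (Δ_q ⊗ Id) ∘ Δ_q. -/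
open scoped TensorProduct
open scoped Classical

noncomputable section Aux
open Finset

theorem PlanePoset.ext' {α : Type} {P Q : PlanePoset α}
    (h1 : ∀ x y, P.hle x y ↔ Q.hle x y) (h2 : ∀ x y, P.rle x y ↔ Q.rle x y) : P = Q := by
  cases P; cases Q
  simp only [PlanePoset.mk.injEq]
  constructor <;> · funext x y; exact propext (by solve_by_elim)

variable {n : ℕ}

def emb (s : Finset (Fin n)) : Fin s.card → Fin n := s.orderEmbOfFin rfl

theorem emb_strictMono (s : Finset (Fin n)) : StrictMono (emb s) :=
  (s.orderEmbOfFin rfl).strictMono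

theorem emb_inj (s : Finset (Fin n)) : Function.Injective (emb s) :=
  (emb_strictMono s).injective

theorem emb_mem (s : Finset (Fin n)) (i : Fin s.card) : emb s i ∈ s :=
  s.orderEmbOfFin_mem rfl i

theorem emb_surj (s : Finset (Fin n)) {x : Fin n} (hx : x ∈ s) : ∃ i, emb s i = x := by
  have : x ∈ Set.range (s.orderEmbOfFin rfl) := by
    rw [Finset.range_orderEmbOfFin]; exact hx
  exact this

theorem restrict_hle (P : CanonPP n) (s : Finset (Fin n)) (i j : Fin s.card) :
    (P.restrict s).1.hle i j ↔ P.1.hle (emb s i) (emb s j) := Iff.rfl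

theorem restrict_rle (P : CanonPP n) (s : Finset (Fin n)) (i j : Fin s.card) :
    (P.restrict s).1.rle i j ↔ P.1.rle (emb s i) (emb s j) := Iff.rfl

def push (s : Finset (Fin n)) (t : Finset (Fin s.card)) : Finset (Fin n) :=
  t.image (emb s)

def pull (s : Finset (Fin n)) (t : Finset (Fin n)) : Finset (Fin s.card) :=
  univ.filter (fun i => emb s i ∈ t)

theorem mem_push {s : Finset (Fin n)} {t : Finset (Fin s.card)} {x : Fin n} :
    x ∈ push s t ↔ ∃ i ∈ t, emb s i = x := Finset.mem_image

theorem emb_mem_push {s : Finset (Fin n)} {t : Finset (Fin s.card)} {i : Fin s.card} :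
    emb s i ∈ push s t ↔ i ∈ t := by
  rw [mem_push]
  constructor
  · rintro ⟨j, hj, h⟩; rwa [← emb_inj s h]
  · exact fun h => ⟨i, h, rfl⟩

theorem push_subset (s : Finset (Fin n)) (t : Finset (Fin s.card)) : push s t ⊆ s := by
  intro x hx; obtain ⟨i, _, rfl⟩ := mem_push.1 hx; exact emb_mem s i

theorem card_push (s : Finset (Fin n)) (t : Finset (Fin s.card)) :
    (push s t).card = t.card := Finset.card_image_of_injective _ (emb_inj s)

theorem pull_push (s : Finset (Fin n)) (t : Finset (Fin s.card)) :
    pull s (push s t) = t := by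
  ext i; simp [pull, emb_mem_push]

theorem push_pull (s : Finset (Fin n)) {t : Finset (Fin n)} (h : t ⊆ s) :
    push s (pull s t) = t := by
  ext x
  rw [mem_push]
  constructor
  · rintro ⟨i, hi, rfl⟩
    simpa [pull] using hi
  · intro hx
    obtain ⟨i, rfl⟩ := emb_surj s (h hx)
    exact ⟨i, by simpa [pull] using hx, rfl⟩

theorem push_compl (s : Finset (Fin n)) (t : Finset (Fin s.card)) :
    push s tᶜ = s \ push s t := by
  ext x
  rw [mem_push, Finset.mem_sdiff]
  constructor
  · rintro ⟨i, hi, rfl⟩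
    refine ⟨emb_mem s i, fun h => ?_⟩
    rw [emb_mem_push] at h
    simp only [Finset.mem_compl] at hi
    exact hi h
  · rintro ⟨hxs, hxp⟩
    obtain ⟨i, rfl⟩ := emb_surj s hxs
    exact ⟨i, by simpa [emb_mem_push] using hxp, rfl⟩

theorem sigma_restrict_eq {m : ℕ} (P : CanonPP n) (s : Finset (Fin n))
    (Q : CanonPP m) (f : Fin m → Fin n) (hf : StrictMono f)
    (hfs : ∀ i, f i ∈ s) (hsf : ∀ x ∈ s, ∃ i, f i = x)
    (hh : ∀ i j, Q.1.hle i j ↔ P.1.hle (f i) (f j))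
    (hr : ∀ i j, Q.1.rle i j ↔ P.1.rle (f i) (f j)) :
    (⟨m, Q⟩ : PPS) = ⟨s.card, P.restrict s⟩ := by
  have hs : s = Finset.image f Finset.univ := by
    ext x
    simp only [Finset.mem_image, Finset.mem_univ, true_and]
    exact ⟨fun hx => hsf x hx, by rintro ⟨i, rfl⟩; exact hfs i⟩
  have hm : s.card = m := by
    rw [hs, Finset.card_image_of_injective _ hf.injective, Finset.card_univ, Fintype.card_fin]
  subst hm
  have hfe : f = emb s := Finset.orderEmbOfFin_unique rfl hfs hf
  have : Q = P.restrict s := by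
    apply Subtype.ext
    apply PlanePoset.ext'
    · intro i j; rw [hh, restrict_hle, hfe]
    · intro i j; rw [hr, restrict_rle, hfe]
  rw [this]

end Aux
noncomputable section Aux2
open Finset
variable {n : ℕ}

theorem hNum_push (P : CanonPP n) (s : Finset (Fin n)) (u v : Finset (Fin s.card)) :
    hNum (P.restrict s) u v = hNum P (push s u) (push s v) := by
  unfold hNum
  apply Finset.card_bij (fun p _ => (emb s p.1, emb s p.2))
  · intro p hp
    simp only [Finset.mem_filter, Finset.mem_product] at hp ⊢
    exact ⟨⟨emb_mem_push.2 hp.1.1, emb_mem_push.2 hp.1.2⟩,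
      (restrict_hle P s p.1 p.2).1 hp.2.1, fun h => hp.2.2 (emb_inj s h)⟩
  · intro p hp q hq h
    simp only [Prod.mk.injEq] at h
    exact Prod.ext (emb_inj s h.1) (emb_inj s h.2)
  · intro p hp
    simp only [Finset.mem_filter, Finset.mem_product] at hp
    obtain ⟨i, hi, hix⟩ := mem_push.1 hp.1.1
    obtain ⟨j, hj, hjy⟩ := mem_push.1 hp.1.2
    refine ⟨(i, j), Finset.mem_filter.2 ⟨Finset.mem_product.2 ⟨hi, hj⟩, ?_, ?_⟩, ?_⟩
    · rw [restrict_hle, hix, hjy]; exact hp.2.1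
    · intro hij
      apply hp.2.2
      rw [← hix, ← hjy]
      exact congrArg (emb s) hij
    · simp [hix, hjy]

theorem hNum_union_left (P : CanonPP n) {s₁ s₂ : Finset (Fin n)} (t : Finset (Fin n))
    (h : Disjoint s₁ s₂) :
    hNum P (s₁ ∪ s₂) t = hNum P s₁ t + hNum P s₂ t := by
  unfold hNum
  rw [Finset.union_product, Finset.filter_union]
  apply Finset.card_union_of_disjoint
  apply Finset.disjoint_filter_filter
  refine Finset.disjoint_left.2 fun p hp hq => ?_
  exact Finset.disjoint_left.1 h (Finset.mem_product.1 hp).1 (Finset.mem_product.1 hq).1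

theorem hNum_union_right (P : CanonPP n) (s : Finset (Fin n)) {t₁ t₂ : Finset (Fin n)}
    (h : Disjoint t₁ t₂) :
    hNum P s (t₁ ∪ t₂) = hNum P s t₁ + hNum P s t₂ := by
  unfold hNum
  rw [Finset.product_union, Finset.filter_union]
  apply Finset.card_union_of_disjoint
  apply Finset.disjoint_filter_filter
  refine Finset.disjoint_left.2 fun p hp hq => ?_
  exact Finset.disjoint_left.1 h (Finset.mem_product.1 hp).2 (Finset.mem_product.1 hq).2

theorem isBiideal_push {P : CanonPP n} {B : Finset (Fin n)} (hB : IsBiideal P B)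
    (J : Finset (Fin B.card)) :
    IsBiideal (P.restrict B) J ↔ IsBiideal P (push B J) := by
  constructor
  · intro hJ x y hx hxy
    obtain ⟨i, hi, rfl⟩ := mem_push.1 hx
    have hyB : y ∈ B := hB _ y (emb_mem B i) hxy
    obtain ⟨j, rfl⟩ := emb_surj B hyB
    exact emb_mem_push.2 (hJ i j hi hxy)
  · intro hA i j hi hij
    have : emb B j ∈ push B J := hA (emb B i) (emb B j) (emb_mem_push.2 hi) hij
    exact emb_mem_push.1 this

theorem isBiideal_union_push {P : CanonPP n} {A : Finset (Fin n)} (hA : IsBiideal P A)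
    (J : Finset (Fin (Aᶜ : Finset (Fin n)).card)) :
    IsBiideal (P.restrict Aᶜ) J ↔ IsBiideal P (A ∪ push Aᶜ J) := by
  constructor
  · intro hJ x y hx hxy
    rw [Finset.mem_union] at hx
    rcases hx with hx | hx
    · exact Finset.mem_union_left _ (hA x y hx hxy)
    · obtain ⟨i, hi, rfl⟩ := mem_push.1 hx
      by_cases hy : y ∈ A
      · exact Finset.mem_union_left _ hy
      · obtain ⟨j, rfl⟩ := emb_surj Aᶜ (Finset.mem_compl.2 hy)
        exact Finset.mem_union_right _ (emb_mem_push.2 (hJ i j hi hxy))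
  · intro hU i j hi hij
    have h1 : emb Aᶜ i ∈ A ∪ push Aᶜ J :=
      Finset.mem_union_right _ (emb_mem_push.2 hi)
    have h2 : emb Aᶜ j ∈ A ∪ push Aᶜ J := hU _ _ h1 hij
    rw [Finset.mem_union] at h2
    rcases h2 with h2 | h2
    · exact absurd h2 (Finset.mem_compl.1 (emb_mem Aᶜ j))
    · exact emb_mem_push.1 h2

theorem sigma_restrict_restrict (P : CanonPP n) (s : Finset (Fin n)) (t : Finset (Fin s.card)) :
    (⟨t.card, (P.restrict s).restrict t⟩ : PPS) = ⟨(push s t).card, P.restrict (push s t)⟩ := by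
  apply sigma_restrict_eq P (push s t) _ (fun i => emb s (emb t i))
  · exact (emb_strictMono s).comp (emb_strictMono t)
  · intro i
    exact mem_push.2 ⟨emb t i, emb_mem t i, rfl⟩
  · intro x hx
    obtain ⟨j, hj, rfl⟩ := mem_push.1 hx
    obtain ⟨i, rfl⟩ := emb_surj t hj
    exact ⟨i, rfl⟩
  · intro i j; exact Iff.rfl
  · intro i j; exact Iff.rfl

theorem compl_eq_union {A B : Finset (Fin n)} (h : A ⊆ B) :
    (Aᶜ : Finset (Fin n)) = Bᶜ ∪ (B \ A) := by
  ext x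
  simp only [Finset.mem_compl, Finset.mem_union, Finset.mem_sdiff]
  constructor
  · intro hx
    by_cases hb : x ∈ B
    · exact Or.inr ⟨hb, hx⟩
    · exact Or.inl hb
  · rintro (hx | ⟨_, hx⟩) hA
    · exact hx (h hA)
    · exact hx hA

theorem compl_sdiff_sdiff {A B : Finset (Fin n)} (h : A ⊆ B) :
    (Aᶜ : Finset (Fin n)) \ (B \ A) = Bᶜ := by
  rw [compl_eq_union h, Finset.union_sdiff_cancel_right]
  refine Finset.disjoint_left.2 fun x hx hx2 => ?_
  exact Finset.mem_compl.1 hx (Finset.mem_sdiff.1 hx2).1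

end Aux2
noncomputable section Aux3
open Finset

theorem Delta_single (K : Type) [Field K] (q : K) (X : PPS) :
    Delta K q (Finsupp.single X (1 : K)) = deltaOn K q X.2 := by
  simp [Delta, Finsupp.lift_apply, Finsupp.sum_single_index]

theorem Delta_single' (K : Type) [Field K] (q : K) {m : ℕ} (Q : CanonPP m) :
    Delta K q (Finsupp.single (⟨m, Q⟩ : PPS) (1 : K)) = deltaOn K q Q :=
  Delta_single K q ⟨m, Q⟩

/-- The common value of both iterated coproducts on the nested biideals `A ⊆ B`. -/
def triple (K : Type) [Field K] (q : K) {n : ℕ} (P : CanonPP n) (A B : Finset (Fin n)) :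
    (PPS →₀ K) ⊗[K] ((PPS →₀ K) ⊗[K] (PPS →₀ K)) :=
  q ^ (hNum P Bᶜ A + hNum P Bᶜ (B \ A) + hNum P (B \ A) A) •
    (Finsupp.single (⟨(Bᶜ : Finset (Fin n)).card, P.restrict Bᶜ⟩ : PPS) (1 : K) ⊗ₜ[K]
      (Finsupp.single (⟨(B \ A).card, P.restrict (B \ A)⟩ : PPS) (1 : K) ⊗ₜ[K]
        Finsupp.single (⟨A.card, P.restrict A⟩ : PPS) (1 : K)))

theorem lhs_eq (K : Type) [Field K] (q : K) {n : ℕ} (P : CanonPP n) :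
    TensorProduct.map LinearMap.id (Delta K q) (deltaOn K q P)
      = ∑ B ∈ univ.filter (fun B : Finset (Fin n) => IsBiideal P B),
          ∑ A ∈ univ.filter (fun A : Finset (Fin n) => IsBiideal P A ∧ A ⊆ B),
            triple K q P A B := by
  unfold deltaOn
  rw [map_sum]
  refine Finset.sum_congr rfl fun B hB => ?_
  have hBb : IsBiideal P B := (Finset.mem_filter.1 hB).2
  rw [map_smul, TensorProduct.map_tmul, LinearMap.id_apply, Delta_single']
  show _ = ∑ A ∈ univ.filter (fun A : Finset (Fin n) => IsBiideal P A ∧ A ⊆ B),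
      triple K q P A B
  unfold deltaOn
  rw [TensorProduct.tmul_sum, Finset.smul_sum]
  refine Finset.sum_nbij' (push B) (pull B) ?_ ?_ ?_ ?_ ?_
  · intro J hJ
    rw [Finset.mem_filter] at hJ ⊢
    exact ⟨Finset.mem_univ _, (isBiideal_push hBb J).1 hJ.2, push_subset B J⟩
  · intro A hA
    rw [Finset.mem_filter] at hA ⊢
    refine ⟨Finset.mem_univ _, ?_⟩
    rw [isBiideal_push hBb, push_pull B hA.2.2]
    exact hA.2.1
  · intro J _
    exact pull_push B J
  · intro A hA
    rw [Finset.mem_filter] at hA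
    exact push_pull B hA.2.2
  · intro J hJ
    rw [Finset.mem_filter] at hJ
    have hAB : push B J ⊆ B := push_subset B J
    show _ = triple K q P (push B J) B
    have h1 : hNum P Bᶜ B = hNum P Bᶜ (push B J) + hNum P Bᶜ (B \ push B J) := by
      have h := hNum_union_right P Bᶜ
        (t₁ := push B J) (t₂ := B \ push B J) Finset.disjoint_sdiff
      rwa [Finset.union_sdiff_of_subset hAB] at h
    rw [TensorProduct.tmul_smul, smul_smul, ← pow_add, hNum_push, push_compl,
      sigma_restrict_restrict P B Jᶜ, sigma_restrict_restrict P B J, push_compl]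
    unfold triple
    rw [h1]

theorem rhs_eq (K : Type) [Field K] (q : K) {n : ℕ} (P : CanonPP n) :
    (TensorProduct.assoc K _ _ _).toLinearMap
        (TensorProduct.map (Delta K q) LinearMap.id (deltaOn K q P))
      = ∑ A ∈ univ.filter (fun A : Finset (Fin n) => IsBiideal P A),
          ∑ B ∈ univ.filter (fun B : Finset (Fin n) => IsBiideal P B ∧ A ⊆ B),
            triple K q P A B := by
  unfold deltaOn
  rw [map_sum, map_sum]
  refine Finset.sum_congr rfl fun A hA => ?_
  have hAb : IsBiideal P A := (Finset.mem_filter.1 hA).2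
  rw [map_smul, TensorProduct.map_tmul, LinearMap.id_apply, Delta_single', map_smul]
  show _ = ∑ B ∈ univ.filter (fun B : Finset (Fin n) => IsBiideal P B ∧ A ⊆ B),
      triple K q P A B
  unfold deltaOn
  rw [TensorProduct.sum_tmul, map_sum, Finset.smul_sum]
  have hpdis : ∀ J : Finset (Fin (Aᶜ : Finset (Fin n)).card), Disjoint A (push Aᶜ J) := by
    intro J
    refine Finset.disjoint_left.2 fun x hx hx2 => ?_
    exact Finset.mem_compl.1 (push_subset Aᶜ J hx2) hx
  have hsd : ∀ J : Finset (Fin (Aᶜ : Finset (Fin n)).card),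
      (A ∪ push Aᶜ J) \ A = push Aᶜ J := fun J =>
    Finset.union_sdiff_cancel_left (hpdis J)
  refine Finset.sum_nbij' (fun J => A ∪ push Aᶜ J) (fun B => pull Aᶜ (B \ A)) ?_ ?_ ?_ ?_ ?_
  · intro J hJ
    rw [Finset.mem_filter] at hJ ⊢
    exact ⟨Finset.mem_univ _, (isBiideal_union_push hAb J).1 hJ.2, Finset.subset_union_left⟩
  · intro B hB
    rw [Finset.mem_filter] at hB ⊢
    refine ⟨Finset.mem_univ _, ?_⟩
    rw [isBiideal_union_push hAb, push_pull Aᶜ (by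
      intro x hx
      rw [Finset.mem_sdiff] at hx
      exact Finset.mem_compl.2 hx.2), Finset.union_sdiff_of_subset hB.2.2]
    exact hB.2.1
  · intro J _
    show pull Aᶜ ((A ∪ push Aᶜ J) \ A) = J
    rw [hsd J, pull_push]
  · intro B hB
    rw [Finset.mem_filter] at hB
    show A ∪ push Aᶜ (pull Aᶜ (B \ A)) = B
    rw [push_pull Aᶜ (by
      intro x hx
      rw [Finset.mem_sdiff] at hx
      exact Finset.mem_compl.2 hx.2), Finset.union_sdiff_of_subset hB.2.2]
  · intro J hJ
    rw [Finset.mem_filter] at hJ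
    have hAB : A ⊆ A ∪ push Aᶜ J := Finset.subset_union_left
    have hc2 : (Aᶜ : Finset (Fin n)) \ push Aᶜ J = (A ∪ push Aᶜ J)ᶜ := by
      have h := compl_sdiff_sdiff hAB
      rwa [hsd J] at h
    have h1 : hNum P Aᶜ A
        = hNum P ((Aᶜ : Finset (Fin n)) \ push Aᶜ J) A + hNum P (push Aᶜ J) A := by
      have h := hNum_union_left P (t := A)
        (s₁ := (Aᶜ : Finset (Fin n)) \ push Aᶜ J) (s₂ := push Aᶜ J) Finset.sdiff_disjoint
      rwa [Finset.sdiff_union_of_subset (push_subset Aᶜ J)] at h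
    show _ = triple K q P A (A ∪ push Aᶜ J)
    rw [← TensorProduct.smul_tmul', map_smul]
    simp only [LinearEquiv.coe_coe, TensorProduct.assoc_tmul]
    rw [smul_smul, ← pow_add, hNum_push, push_compl,
      sigma_restrict_restrict P Aᶜ Jᶜ, sigma_restrict_restrict P Aᶜ J, push_compl]
    unfold triple
    rw [hsd J, ← hc2, h1]
    ring_nf

theorem double_swap' {m : ℕ} {M : Type*} [AddCommMonoid M]
    (c : Finset (Fin m) → Prop) (f : Finset (Fin m) → Finset (Fin m) → M) :
    ∑ b ∈ univ.filter c, ∑ a ∈ univ.filter (fun a => c a ∧ a ⊆ b), f a b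
      = ∑ a ∈ univ.filter c, ∑ b ∈ univ.filter (fun b => c b ∧ a ⊆ b), f a b := by
  have key : ∀ (p : Prop) (_ : Decidable p) (g : Finset (Fin m) → M),
      (if p then ∑ a, g a else 0) = ∑ a, if p then g a else 0 := by
    intro p hp g
    split <;> simp
  calc ∑ b ∈ univ.filter c, ∑ a ∈ univ.filter (fun a => c a ∧ a ⊆ b), f a b
      = ∑ b, ∑ a, if c b ∧ c a ∧ a ⊆ b then f a b else 0 := by
        rw [Finset.sum_filter]
        refine Finset.sum_congr rfl fun b _ => ?_
        rw [Finset.sum_filter, key]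
        refine Finset.sum_congr rfl fun a _ => ?_
        by_cases h1 : c b <;> by_cases h2 : c a ∧ a ⊆ b <;> simp [h1, h2]
    _ = ∑ a, ∑ b, if c b ∧ c a ∧ a ⊆ b then f a b else 0 := Finset.sum_comm
    _ = ∑ a ∈ univ.filter c, ∑ b ∈ univ.filter (fun b => c b ∧ a ⊆ b), f a b := by
        rw [Finset.sum_filter]
        refine Finset.sum_congr rfl fun a _ => ?_
        rw [Finset.sum_filter, key]
        refine Finset.sum_congr rfl fun b _ => ?_
        by_cases h1 : c a <;> by_cases h2 : c b ∧ a ⊆ b <;> simp [h1, h2]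

end Aux3

set_option maxHeartbeats 1000000 in
/-- The coproduct `Δ_q` on `h_PP` is coassociative. -/
theorem statement2 (K : Type) [Field K] (q : K) :
    TensorProduct.map LinearMap.id (Delta K q) ∘ₗ Delta K q
      = (TensorProduct.assoc K _ _ _).toLinearMap ∘ₗ
          TensorProduct.map (Delta K q) LinearMap.id ∘ₗ Delta K q := by
  apply Finsupp.lhom_ext
  intro X b
  have hb : (Finsupp.single X b : PPS →₀ K) = b • Finsupp.single X 1 := by
    rw [Finsupp.smul_single, smul_eq_mul, mul_one]
  rw [hb, map_smul, map_smul]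
  congr 1
  simp only [LinearMap.comp_apply]
  rw [Delta_single, lhs_eq, rhs_eq]
  exact double_swap' (fun A => IsBiideal X.2 A) (fun A B => triple K q X.2 A B)
end

section
/- Let P, Q be plane posets of the same cardinality n, and let θ_{P,Q} : P → Q be the unique increasing bijection for the induced total orders. The following assertions are equivalent: (1) for all x, y ∈ P, (θ_{P,Q}(x) ≤_h θ_{P,Q}(y) in Q) implies (x ≤_h y in P); (2) for all x, y ∈ P, (x ≤_r y in P) implies (θ_{P,Q}(x) ≤_r θ_{P,Q}(y) in Q). -/
open scoped TensorProduct
open scoped Classical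

/-- Let `P, Q` be plane posets of the same cardinality and let `θ` be the
(unique) increasing bijection from `P` to `Q` for the induced total orders. Then
`(θ(x) ≤_h θ(y) in Q ⟹ x ≤_h y in P)` for all `x, y` if and only if
`(x ≤_r y in P ⟹ θ(x) ≤_r θ(y) in Q)` for all `x, y`. -/
theorem statement5 {α β : Type} [Fintype α] [Fintype β] (P : PlanePoset α) (Q : PlanePoset β)
    (θ : α ≃ β)
    (hθ : ∀ x y : α, (P.hle x y ∨ P.rle x y) → (Q.hle (θ x) (θ y) ∨ Q.rle (θ x) (θ y))) :
    (∀ x y : α, Q.hle (θ x) (θ y) → P.hle x y) ↔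
      (∀ x y : α, P.rle x y → Q.rle (θ x) (θ y)) := by
  constructor
  · intro h1 x y hr
    by_cases hxy : x = y
    · subst hxy; exact Q.rle_refl _
    rcases hθ x y (Or.inr hr) with hh | hr'
    · have hP := h1 x y hh
      have := P.compat x y hxy
      tauto
    · exact hr'
  · intro h2 x y hh
    by_cases hxy : x = y
    · subst hxy; exact P.hle_refl _
    have hθne : θ x ≠ θ y := fun h => hxy (θ.injective h)
    have htot : (P.hle x y ∨ P.rle x y) ∨ (P.hle y x ∨ P.rle y x) := by
      have := P.compat x y hxy
      tauto
    rcases htot with (h | h) | (h | h)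
    · exact h
    · have := h2 x y h
      have := Q.compat (θ x) (θ y) hθne
      tauto
    · rcases hθ y x (Or.inl h) with hh' | hr'
      · exact absurd (Q.hle_antisymm _ _ hh hh') hθne
      · have := Q.compat (θ x) (θ y) hθne
        tauto
    · have := h2 y x h
      have := Q.compat (θ x) (θ y) hθne
      tauto
end

section
/- For all n ≥ 1, the relation ≤ on PP(n), defined by P ≤ Q iff for all x, y ∈ P, (θ_{P,Q}(x) ≤_h θ_{P,Q}(y) in Q) implies (x ≤_h y in P), is a partial order (reflexive, antisymmetric up to isomorphism of plane posets, and transitive). -/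
open scoped TensorProduct
open scoped Classical

lemma canon_rle_iff {n : ℕ} (P : CanonPP n) (x y : Fin n) :
    P.1.rle x y ↔ (x ≤ y ∧ (x = y ∨ ¬ P.1.hle x y)) := by
  constructor
  · intro h
    refine ⟨(P.2 x y).mp (Or.inr h), ?_⟩
    by_cases hxy : x = y
    · exact Or.inl hxy
    · right
      intro hh
      exact ((P.1.compat x y hxy).mp (Or.inl hh)) (Or.inl h)
  · rintro ⟨hle, h⟩
    rcases h with rfl | h
    · exact P.1.rle_refl x
    · have hxy : x ≠ y := fun e => h (e ▸ P.1.hle_refl x)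
      have := (P.2 x y).mpr hle
      rcases this with h1 | h1
      · exact absurd h1 h
      · exact h1
    
/-- For all `n ≥ 1`, the relation `≤` on `PP(n)` is a partial order. -/
theorem statement6 (n : ℕ) (hn : 1 ≤ n) :
    IsPartialOrder (CanonPP n) PPle := by
  refine { refl := fun P x y h => h,
           trans := fun P Q R h1 h2 x y h => h1 x y (h2 x y h),
           antisymm := ?_ }
  intro P Q h1 h2
  have hhle : P.1.hle = Q.1.hle := by
    funext x y
    exact propext ⟨fun h => h2 x y h, fun h => h1 x y h⟩
  have hrle : P.1.rle = Q.1.rle := by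
    funext x y
    rw [propext (canon_rle_iff P x y), propext (canon_rle_iff Q x y), hhle]
  apply Subtype.ext
  obtain ⟨P, hP⟩ := P
  obtain ⟨Q, hQ⟩ := Q
  cases P; cases Q
  simp only at hhle hrle
  congr
end

section
/- Let 1 ≤ i < j ≤ n and let σ ∈ S_n be a permutation in which i and j occur as consecutive letters in this order, i.e., there is k with σ(k) = i and σ(k+1) = j. Let τ = (i j) ∘ σ, where (i j) is the transposition of i and j. Then E(Ψ_n(τ)) = E(Ψ_n(σ)) ∖ {(i,j)}. -/
open scoped TensorProduct
open scoped Classical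

/-- Let `1 ≤ i < j ≤ n` and let `σ` be a permutation in which `i` and `j`
occur as consecutive letters, in this order. Let `τ = (i j) ∘ σ`. Then
`E(Ψ_n(τ)) = E(Ψ_n(σ)) ∖ {(i,j)}`. -/
theorem statement7 {n : ℕ} (i j : Fin n) (hij : i < j) (σ : Equiv.Perm (Fin n))
    (k : Fin n) (hk : (k : ℕ) + 1 < n)
    (hki : σ k = i) (hkj : σ ⟨(k : ℕ) + 1, hk⟩ = j) :
    Eset (PsiPerm (Equiv.swap i j * σ)) = Eset (PsiPerm σ) \ {(i, j)} := by
  have hsi : σ.symm i = k := by rw [← hki]; simp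
  have hsj : σ.symm j = ⟨(k : ℕ) + 1, hk⟩ := by rw [← hkj]; simp
  have hsi' : ((σ.symm i : Fin n) : ℕ) = (k : ℕ) := by rw [hsi]
  have hsj' : ((σ.symm j : Fin n) : ℕ) = (k : ℕ) + 1 := by rw [hsj]
  have hij' : (i : ℕ) < (j : ℕ) := hij
  have hτ : ∀ z : Fin n, (Equiv.swap i j * σ).symm z = σ.symm (Equiv.swap i j z) := by
    intro z; rfl
  have hne : ∀ z : Fin n, z ≠ i → z ≠ j →
      ((σ.symm z : ℕ) ≠ (k : ℕ) ∧ (σ.symm z : ℕ) ≠ (k : ℕ) + 1) := by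
    intro z hzi hzj
    constructor
    · intro h
      exact hzi (σ.symm.injective (by rw [hsi]; exact Fin.ext h))
    · intro h
      exact hzj (σ.symm.injective (by rw [hsj]; exact Fin.ext (by rw [h])))
  ext ⟨x, y⟩
  simp only [Eset, PsiPerm, Set.mem_setOf_eq, Set.mem_diff, Set.mem_singleton_iff,
    Prod.mk.injEq, not_and, hτ]
  by_cases hxi : x = i <;> by_cases hxj : x = j <;>
    by_cases hyi : y = i <;> by_cases hyj : y = j
  all_goals first
    | exact absurd (hxi.symm.trans hxj) hij.ne
    | exact absurd (hyi.symm.trans hyj) hij.ne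
    | skip
  · -- x = i, y = i
    rw [hxi, hyi, Equiv.swap_apply_left]
    simp only [Fin.le_def, ne_eq, Fin.ext_iff]
    first
      | omega
      | (simp; omega)
      | simp
  · -- x = i, y = j
    rw [hxi, hyj, Equiv.swap_apply_left, Equiv.swap_apply_right]
    simp only [Fin.le_def, ne_eq, Fin.ext_iff]
    first
      | omega
      | (simp; omega)
      | simp
  · -- x = i, y other
    obtain ⟨h1, h2⟩ := hne y hyi hyj
    have hyj' : (y : ℕ) ≠ (j : ℕ) := fun h => hyj (Fin.ext h)
    rw [hxi, Equiv.swap_apply_left, Equiv.swap_apply_of_ne_of_ne hyi hyj]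
    simp only [Fin.le_def, ne_eq, Fin.ext_iff]
    first
      | omega
      | (simp; omega)
      | simp
  · -- x = j, y = i
    rw [hxj, hyi, Equiv.swap_apply_left, Equiv.swap_apply_right]
    simp only [Fin.le_def, ne_eq, Fin.ext_iff]
    first
      | omega
      | (simp; omega)
      | simp
  · -- x = j, y = j
    rw [hxj, hyj, Equiv.swap_apply_right]
    simp only [Fin.le_def, ne_eq, Fin.ext_iff]
    first
      | omega
      | (simp; omega)
      | simp
  · -- x = j, y other
    obtain ⟨h1, h2⟩ := hne y hyi hyj
    rw [hxj, Equiv.swap_apply_right, Equiv.swap_apply_of_ne_of_ne hyi hyj]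
    simp only [Fin.le_def, ne_eq, Fin.ext_iff]
    first
      | omega
      | (simp; omega)
      | simp
  · -- x other, y = i
    obtain ⟨h1, h2⟩ := hne x hxi hxj
    have hxi' : (x : ℕ) ≠ (i : ℕ) := fun h => hxi (Fin.ext h)
    rw [hyi, Equiv.swap_apply_left, Equiv.swap_apply_of_ne_of_ne hxi hxj]
    simp only [Fin.le_def, ne_eq, Fin.ext_iff]
    first
      | omega
      | (simp; omega)
      | simp
  · -- x other, y = j
    obtain ⟨h1, h2⟩ := hne x hxi hxj
    have hxi' : (x : ℕ) ≠ (i : ℕ) := fun h => hxi (Fin.ext h)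
    rw [hyj, Equiv.swap_apply_right, Equiv.swap_apply_of_ne_of_ne hxi hxj]
    simp only [Fin.le_def, ne_eq, Fin.ext_iff]
    first
      | omega
      | (simp; omega)
      | simp
  · -- x other, y other
    obtain ⟨h1, h2⟩ := hne x hxi hxj
    obtain ⟨h3, h4⟩ := hne y hyi hyj
    have hxi' : (x : ℕ) ≠ (i : ℕ) := fun h => hxi (Fin.ext h)
    rw [Equiv.swap_apply_of_ne_of_ne hxi hxj, Equiv.swap_apply_of_ne_of_ne hyi hyj]
    simp only [Fin.le_def, ne_eq, Fin.ext_iff]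
    first
      | omega
      | (simp; omega)
      | simp
end
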